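/- The function ĝ is continuous and strictly decreasing on ℝ, with ĝ(z) → 0 as z → +∞ and ĝ(z) → +∞ as z → −∞; consequently, for every α > 0 there exists a unique z ∈ ℝ with ĝ(z) = α. -/

import Mathlib

/-!
All rates of a pair `(a, b) ∈ A` share one value `β > 0`, so homogeneity of `G` factors the
objective as `G(exp(a_i - β (z + c_i))) = e^{-β (z - z₀)} · G(exp(a_i - β (z₀ + c_i)))`. Hence
`ĝ` is a minimum over the compact set `A` of positive exponentials decaying in `z`, whose rates
are bounded below by a positive constant; positivity of `G` is Euler's identity
`G(Y) = ∑ Y_i ∂_i G(Y)`. Continuity is that of a minimum over a compact set of a jointly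
continuous function, and the unique solution of `ĝ(z) = α` comes from the intermediate value
theorem.
-/

/-- Worst-case CPGF value `ĝ(z) = min_{(a,b)∈A} G(exp(a_i − b_i (z + c_i)))`. -/
noncomputable def ghat (m : ℕ) (G : (Fin m → ℝ) → ℝ) (c : Fin m → ℝ)
    (A : Set ((Fin m → ℝ) × (Fin m → ℝ))) (z : ℝ) : ℝ :=
  sInf ((fun ab : (Fin m → ℝ) × (Fin m → ℝ) =>
    G fun i => Real.exp (ab.1 i - ab.2 i * (z + c i))) '' A)

open Filter Topology Real

theorem isOpen_setOf_forall_pos {ι : Type*} [Finite ι] : IsOpen {Y : ι → ℝ | ∀ i, 0 < Y i} := by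
  simpa only [Set.ofPred_forall] using
    isOpen_iInter_of_finite fun i => isOpen_lt continuous_const (continuous_apply i)

theorem fderiv_apply_self_of_homogeneous {E : Type*} [NormedAddCommGroup E] [NormedSpace ℝ E]
    {G : E → ℝ} {Y : E} (hG : DifferentiableAt ℝ G Y)
    (hhom : ∀ lam : ℝ, 0 < lam → G (lam • Y) = lam * G Y) :
    fderiv ℝ G Y Y = G Y := by
  have hray : HasDerivAt (fun lam : ℝ => G (lam • Y)) (fderiv ℝ G Y Y) 1 := by
    have := hG.hasFDerivAt.comp_hasDerivAt_of_eq 1 ((hasDerivAt_id' 1).smul_const Y)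
      (one_smul ℝ Y).symm
    rwa [one_smul] at this
  have hlin : HasDerivAt (fun lam : ℝ => G (lam • Y)) (G Y) 1 := by
    refine ((hasDerivAt_id 1).mul_const (G Y)).congr_of_eventuallyEq ?_ |>.congr_deriv (one_mul _)
    filter_upwards [eventually_gt_nhds one_pos] with lam hlam
    exact hhom lam hlam
  exact hray.unique hlin

theorem pos_of_homogeneous_of_fderiv_single_pos {ι : Type*} [Fintype ι] [DecidableEq ι]
    [Nonempty ι] {G : (ι → ℝ) → ℝ} {Y : ι → ℝ} (hY : ∀ i, 0 < Y i) (hG : DifferentiableAt ℝ G Y)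
    (hhom : ∀ lam : ℝ, 0 < lam → G (lam • Y) = lam * G Y)
    (hpartial : ∀ i, 0 < fderiv ℝ G Y (Pi.single i 1)) :
    0 < G Y := by
  have heuler : fderiv ℝ G Y Y = ∑ i, Y i * fderiv ℝ G Y (Pi.single i 1) := by
    calc fderiv ℝ G Y Y = fderiv ℝ G Y (∑ i, Y i • Pi.single i 1) := by
          simp only [← Pi.single_smul, smul_eq_mul, mul_one, Finset.univ_sum_single]
      _ = ∑ i, Y i * fderiv ℝ G Y (Pi.single i 1) := by simp only [map_sum, map_smul, smul_eq_mul]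
  rw [← fderiv_apply_self_of_homogeneous hG hhom, heuler]
  exact Finset.sum_pos (fun i _ => mul_pos (hY i) (hpartial i)) Finset.univ_nonempty

theorem StrictAnti.existsUnique_eq_of_tendsto {f : ℝ → ℝ} {a α : ℝ} (hanti : StrictAnti f)
    (hf : Continuous f) (htop : Tendsto f atTop (𝓝 a)) (hbot : Tendsto f atBot atTop)
    (ha : a < α) : ∃! z, f z = α := by
  obtain ⟨z, hz⟩ := mem_range_of_exists_le_of_exists_ge hf
    ((htop.eventually (eventually_lt_nhds ha)).exists.imp fun _ => le_of_lt)
    (hbot.eventually (eventually_ge_atTop α)).exists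
  exact ⟨z, hz, fun y hy => hanti.injective (hy.trans hz.symm)⟩

section CPGF

variable {ι : Type*} {G : (ι → ℝ) → ℝ} {c : ι → ℝ}

noncomputable def cpgf (G : (ι → ℝ) → ℝ) (c : ι → ℝ) (z : ℝ) (ab : (ι → ℝ) × (ι → ℝ)) : ℝ :=
  G fun i => exp (ab.1 i - ab.2 i * (z + c i))

theorem continuous_cpgf (hG : ContinuousOn G {Y | ∀ i, 0 < Y i}) :
    Continuous (Function.uncurry (cpgf G c)) :=
  show Continuous fun p : ℝ × (ι → ℝ) × (ι → ℝ) =>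
      G fun i => exp (p.2.1 i - p.2.2 i * (p.1 + c i)) from
  hG.comp_continuous (by fun_prop) fun _ _ => exp_pos _

theorem cpgf_pos (hG : ∀ Y : ι → ℝ, (∀ i, 0 < Y i) → 0 < G Y) (z : ℝ)
    (ab : (ι → ℝ) × (ι → ℝ)) : 0 < cpgf G c z ab :=
  hG _ fun _ => exp_pos _

theorem cpgf_add (hGhom : ∀ lam : ℝ, 0 < lam → ∀ Y : ι → ℝ, (∀ i, 0 < Y i) →
      G (lam • Y) = lam * G Y)
    {ab : (ι → ℝ) × (ι → ℝ)} {β : ℝ} (hb : ∀ i, ab.2 i = β) (z t : ℝ) :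
    cpgf G c (z + t) ab = exp (-(β * t)) * cpgf G c z ab := by
  rw [cpgf, cpgf, ← hGhom _ (exp_pos _) _ fun _ => exp_pos _]
  congr 1
  ext i
  rw [Pi.smul_apply, smul_eq_mul, ← exp_add, hb]
  ring_nf

end CPGF

section Ghat

variable {m : ℕ} {G : (Fin m → ℝ) → ℝ} {c : Fin m → ℝ} {A : Set ((Fin m → ℝ) × (Fin m → ℝ))}

theorem ghat_eq_sInf (z : ℝ) : ghat m G c A z = sInf (cpgf G c z '' A) := rfl

variable (hGcont : ContinuousOn G {Y | ∀ i, 0 < Y i}) (hA : IsCompact A)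
include hGcont hA

theorem continuous_ghat : Continuous (ghat m G c A) :=
  hA.continuous_sInf (continuous_cpgf hGcont)

theorem ghat_le_cpgf {ab : (Fin m → ℝ) × (Fin m → ℝ)} (hab : ab ∈ A) (z : ℝ) :
    ghat m G c A z ≤ cpgf G c z ab :=
  csInf_le
    (hA.image_of_continuousOn ((continuous_cpgf hGcont).uncurry_left z).continuousOn).bddBelow
    ⟨ab, hab, rfl⟩

theorem exists_ghat_eq_cpgf (hAne : A.Nonempty) (z : ℝ) :
    ∃ ab ∈ A, ghat m G c A z = cpgf G c z ab :=
  hA.exists_sInf_image_eq hAne ((continuous_cpgf hGcont).uncurry_left z).continuousOn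

variable (hGpos : ∀ Y : Fin m → ℝ, (∀ i, 0 < Y i) → 0 < G Y) (hAne : A.Nonempty)
  (hGhom : ∀ lam : ℝ, 0 < lam → ∀ Y : Fin m → ℝ, (∀ i, 0 < Y i) → G (lam • Y) = lam * G Y)
  (hAb : ∀ ab ∈ A, ∃ β : ℝ, 0 < β ∧ ∀ i, ab.2 i = β)
include hGpos hAne

theorem ghat_pos (z : ℝ) : 0 < ghat m G c A z := by
  obtain ⟨ab, -, hmin⟩ := exists_ghat_eq_cpgf hGcont hA hAne z
  exact hmin ▸ cpgf_pos hGpos z ab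

include hGhom hAb

theorem strictAnti_ghat : StrictAnti (ghat m G c A) := by
  intro z₁ z₂ h
  obtain ⟨ab, hab, hmin⟩ := exists_ghat_eq_cpgf hGcont hA hAne z₁
  obtain ⟨β, hβ, hb⟩ := hAb ab hab
  calc ghat m G c A z₂ ≤ cpgf G c z₂ ab := ghat_le_cpgf hGcont hA hab z₂
    _ = exp (-(β * (z₂ - z₁))) * cpgf G c z₁ ab := by rw [← cpgf_add hGhom hb, add_sub_cancel]
    _ < cpgf G c z₁ ab :=
      mul_lt_of_lt_one_left (cpgf_pos hGpos z₁ ab)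
        (exp_lt_one_iff.2 (neg_neg_of_pos (mul_pos hβ (sub_pos.2 h))))
    _ = ghat m G c A z₁ := hmin.symm

theorem tendsto_ghat_atTop : Tendsto (ghat m G c A) atTop (𝓝 0) := by
  obtain ⟨ab, hab⟩ := hAne
  obtain ⟨β, hβ, hb⟩ := hAb ab hab
  have hdecay : Tendsto (fun z => exp (-(β * z)) * cpgf G c 0 ab) atTop (𝓝 0) := by
    simpa using (tendsto_exp_neg_atTop_nhds_zero.comp
      (tendsto_id.const_mul_atTop hβ)).mul_const (cpgf G c 0 ab)
  refine tendsto_of_tendsto_of_tendsto_of_le_of_le tendsto_const_nhds hdecay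
    (fun z => (ghat_pos hGcont hA hGpos ⟨ab, hab⟩ z).le) fun z => ?_
  calc ghat m G c A z ≤ cpgf G c z ab := ghat_le_cpgf hGcont hA hab z
    _ = exp (-(β * z)) * cpgf G c 0 ab := by rw [← cpgf_add hGhom hb, zero_add]

theorem tendsto_ghat_atBot [NeZero m] : Tendsto (ghat m G c A) atBot atTop := by
  obtain ⟨ab₀, hab₀, hβ₀_min⟩ :=
    hA.exists_isMinOn hAne ((continuous_apply 0).comp continuous_snd).continuousOn
  obtain ⟨β₀, hβ₀, hb₀⟩ := hAb ab₀ hab₀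
  have hgrowth : ∀ t, 0 ≤ t → exp (β₀ * t) * ghat m G c A 0 ≤ ghat m G c A (-t) := by
    intro t ht
    rw [ghat_eq_sInf]
    refine le_csInf (hAne.image _) ?_
    rintro _ ⟨ab, hab, rfl⟩
    obtain ⟨β, -, hb⟩ := hAb ab hab
    have hβ₀β : β₀ ≤ β := by simpa [hb, hb₀] using hβ₀_min hab
    calc exp (β₀ * t) * ghat m G c A 0 ≤ exp (β * t) * cpgf G c 0 ab :=
          mul_le_mul (exp_le_exp.2 (mul_le_mul_of_nonneg_right hβ₀β ht))
            (ghat_le_cpgf hGcont hA hab 0) (ghat_pos hGcont hA hGpos hAne 0).le (exp_pos _).le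
      _ = cpgf G c (-t) ab := by rw [← zero_add (-t), cpgf_add hGhom hb, mul_neg, neg_neg]
  have hblowup : Tendsto (fun t => exp (β₀ * t) * ghat m G c A 0) atTop atTop :=
    (tendsto_exp_atTop.comp (tendsto_id.const_mul_atTop hβ₀)).atTop_mul_const
      (ghat_pos hGcont hA hGpos hAne 0)
  have hneg : Tendsto (fun t => ghat m G c A (-t)) atTop atTop :=
    tendsto_atTop_mono' atTop (eventually_ge_atTop 0 |>.mono hgrowth) hblowup
  simpa [Function.comp_def] using hneg.comp tendsto_neg_atBot_atTop

end Ghat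

theorem stmt_4_general
    (m : ℕ) (hm : 1 ≤ m)
    (G : (Fin m → ℝ) → ℝ)
    (hGsmooth : ContDiffOn ℝ 1 G {Y : Fin m → ℝ | ∀ i, 0 < Y i})
    (hGhom : ∀ lam : ℝ, 0 < lam → ∀ Y : Fin m → ℝ, (∀ i, 0 < Y i) →
      G (lam • Y) = lam * G Y)
    (hGd1 : ∀ Y : Fin m → ℝ, (∀ i, 0 < Y i) → ∀ i : Fin m,
      0 < fderiv ℝ G Y (Pi.single i 1))
    (c : Fin m → ℝ)
    (A : Set ((Fin m → ℝ) × (Fin m → ℝ)))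
    (hAne : A.Nonempty) (hAcomp : IsCompact A)
    (hAb : ∀ ab ∈ A, ∃ β : ℝ, 0 < β ∧ ∀ i, ab.2 i = β) :
    Continuous (ghat m G c A) ∧
    StrictAnti (ghat m G c A) ∧
    Filter.Tendsto (ghat m G c A) Filter.atTop (nhds 0) ∧
    Filter.Tendsto (ghat m G c A) Filter.atBot Filter.atTop ∧
    ∀ α : ℝ, 0 < α → ∃! z : ℝ, ghat m G c A z = α := by
  have : NeZero m := ⟨by omega⟩
  have hGpos : ∀ Y : Fin m → ℝ, (∀ i, 0 < Y i) → 0 < G Y := fun Y hY =>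
    pos_of_homogeneous_of_fderiv_single_pos hY
      ((hGsmooth.differentiableOn one_ne_zero Y hY).differentiableAt
        (isOpen_setOf_forall_pos.mem_nhds hY))
      (fun lam hlam => hGhom lam hlam Y hY) (hGd1 Y hY)
  have hGcont := hGsmooth.continuousOn
  have hcont : Continuous (ghat m G c A) := continuous_ghat hGcont hAcomp
  have hanti : StrictAnti (ghat m G c A) :=
    strictAnti_ghat hGcont hAcomp hGpos hAne hGhom hAb
  have htop : Tendsto (ghat m G c A) atTop (𝓝 0) :=
    tendsto_ghat_atTop hGcont hAcomp hGpos hAne hGhom hAb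
  have hbot : Tendsto (ghat m G c A) atBot atTop :=
    tendsto_ghat_atBot hGcont hAcomp hGpos hAne hGhom hAb
  exact ⟨hcont, hanti, htop, hbot, fun α hα => hanti.existsUnique_eq_of_tendsto hcont htop hbot hα⟩

/-- `ĝ` is continuous and strictly decreasing on `ℝ`, tends to `0`
at `+∞` and to `+∞` at `−∞`; hence every `α > 0` equals `ĝ(z)` for exactly one `z`. -/
theorem stmt_4
    (m : ℕ) (hm : 1 ≤ m)
    (G : (Fin m → ℝ) → ℝ)
    (hGsmooth : ContDiffOn ℝ 1 G {Y : Fin m → ℝ | ∀ i, 0 < Y i})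
    (hGhom : ∀ lam : ℝ, 0 < lam → ∀ Y : Fin m → ℝ, (∀ i, 0 < Y i) →
      G (lam • Y) = lam * G Y)
    (hGd1 : ∀ Y : Fin m → ℝ, (∀ i, 0 < Y i) → ∀ i : Fin m,
      0 < fderiv ℝ G Y (Pi.single i 1))
    (c : Fin m → ℝ) (hc : ∀ i, 0 ≤ c i)
    (A : Set ((Fin m → ℝ) × (Fin m → ℝ)))
    (hAne : A.Nonempty) (hAcomp : IsCompact A)
    (hAb : ∀ ab ∈ A, ∃ β : ℝ, 0 < β ∧ ∀ i, ab.2 i = β) :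
    Continuous (ghat m G c A) ∧
    StrictAnti (ghat m G c A) ∧
    Filter.Tendsto (ghat m G c A) Filter.atTop (nhds 0) ∧
    Filter.Tendsto (ghat m G c A) Filter.atBot Filter.atTop ∧
    ∀ α : ℝ, 0 < α → ∃! z : ℝ, ghat m G c A z = α :=
  stmt_4_general m hm G hGsmooth hGhom hGd1 c A hAne hAcomp hAb
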